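/- Let s > 0, let P satisfy H1, and fix x₀ > 0. Suppose there exists a positive solution of the Dyson–Schwinger ODE on [x₀, ∞) with initial value b > 0 at x₀. Then for every a ≥ b there also exists a positive solution on [x₀, ∞) with initial value a at x₀; that is, the set of initial values at x₀ leading to global positive solutions is upward closed. -/

import Mathlib

open Real MeasureTheory Filter Set

noncomputable section

/-- `γ` is a positive solution of the Dyson–Schwinger ODE
`γ'(x) = (γ(x) + γ(x)² − P(x)) / (s·x·γ(x))` on the set `I`. -/
def IsDSSolution (s : ℝ) (P γ : ℝ → ℝ) (I : Set ℝ) : Prop :=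
  (∀ x ∈ I, 0 < γ x) ∧
    ∀ x ∈ I, HasDerivWithinAt γ ((γ x + (γ x) ^ 2 - P x) / (s * x * γ x)) I x

/-- Hypothesis H1: `P` is twice continuously differentiable on `[0,∞)`,
`P 0 = 0`, and `P x > 0` for `x > 0`. -/
def H1 (P : ℝ → ℝ) : Prop :=
  ContDiffOn ℝ 2 P (Set.Ici 0) ∧ P 0 = 0 ∧ ∀ x > (0 : ℝ), 0 < P x

/-- Hypothesis H2: `P` is strictly increasing on `[0,∞)`. -/
def H2 (P : ℝ → ℝ) : Prop := StrictMonoOn P (Set.Ici 0)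

/-- The nullcline `γ_c(x) = (√(1 + 4 P x) − 1)/2`. -/
def gammaC (P : ℝ → ℝ) (x : ℝ) : ℝ := (Real.sqrt (1 + 4 * P x) - 1) / 2

/-! A solution starting above the global positive solution `γb` can never meet it, because
solutions are unique while they stay positive; so it stays above `γb`, hence away from `0`, on
every `[x₀, T]`. Since `P ≥ 0`, it also satisfies `γ' ≤ (1 + γ) / (s x₀)`, and Grönwall bounds
it from above. Clamped to the range between these bounds, the vector field is bounded and
globally Lipschitz in `γ`, so Picard–Lindelöf yields a solution of the clamped equation on all of
`[x₀, T]`, and the a priori bounds show that it solves the original equation. By uniqueness the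
solutions on `[x₀, x₀ + n]` are compatible and glue to a solution on `[x₀, ∞)`. -/

open scoped NNReal Topology

section ODE

variable {v : ℝ → ℝ → ℝ} {K : ℝ≥0} {f g : ℝ → ℝ} {a b : ℝ}

theorem exists_hasDerivWithinAt_Icc_of_lipschitzWith {E : Type*} [NormedAddCommGroup E]
    [NormedSpace ℝ E] [CompleteSpace E] {w : ℝ → E → E} {C : ℝ} (hab : a ≤ b)
    (hw : ∀ t ∈ Icc a b, LipschitzWith K (w t)) (hwc : ∀ x, ContinuousOn (w · x) (Icc a b))
    (hC : ∀ t ∈ Icc a b, ∀ x, ‖w t x‖ ≤ C) (x₀ : E) :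
    ∃ α : ℝ → E, α a = x₀ ∧ ∀ t ∈ Icc a b, HasDerivWithinAt α (w t (α t)) (Icc a b) t := by
  have hC₀ : 0 ≤ C := (norm_nonneg _).trans (hC a (left_mem_Icc.2 hab) x₀)
  have hPL : IsPicardLindelof w (⟨a, left_mem_Icc.2 hab⟩ : Icc a b) x₀
      (⟨C, hC₀⟩ * ⟨b - a, sub_nonneg.2 hab⟩) 0 ⟨C, hC₀⟩ K :=
    { lipschitzOnWith := fun t ht => (hw t ht).lipschitzOnWith
      continuousOn := fun x _ => hwc x
      norm_le := fun t ht x _ => hC t ht x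
      mul_max_le := by simp [hab]; rfl }
  exact hPL.exists_eq_forall_mem_Icc_hasDerivWithinAt₀

theorem ODE_solution_lt_of_lt (hv : ∀ t ∈ Icc a b, LipschitzWith K (v t))
    (hf : ∀ t ∈ Icc a b, HasDerivWithinAt f (v t (f t)) (Icc a b) t)
    (hg : ∀ t ∈ Icc a b, HasDerivWithinAt g (v t (g t)) (Icc a b) t) (ha : g a < f a) :
    ∀ t ∈ Icc a b, g t < f t := by
  intro t ht
  by_contra! hle
  have hfc : ContinuousOn f (Icc a b) := fun x hx => (hf x hx).continuousWithinAt
  have hgc : ContinuousOn g (Icc a b) := fun x hx => (hg x hx).continuousWithinAt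
  obtain ⟨u, hu, hfgu⟩ := intermediate_value_Icc' ht.1
    ((hfc.sub hgc).mono (Icc_subset_Icc_right ht.2))
    (show (0 : ℝ) ∈ Icc (f t - g t) (f a - g a) from ⟨by linarith, by linarith⟩)
  have hub : u ≤ b := hu.2.trans ht.2
  have hderiv {h : ℝ → ℝ} (hh : ∀ t ∈ Icc a b, HasDerivWithinAt h (v t (h t)) (Icc a b) t) :
      ∀ τ ∈ Ioc a u, HasDerivWithinAt h (v τ (h τ)) (Iic τ) τ := fun τ hτ =>
    (hh τ ⟨hτ.1.le, hτ.2.trans hub⟩).mono_of_mem_nhdsWithin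
      (Icc_mem_nhdsLE_of_mem ⟨hτ.1, hτ.2.trans hub⟩)
  have hfg := ODE_solution_unique_of_mem_Icc_left (s := fun _ => univ)
    (fun τ hτ => (hv τ ⟨hτ.1.le, hτ.2.trans hub⟩).lipschitzOnWith)
    (hfc.mono (Icc_subset_Icc_right hub)) (hderiv hf) (fun _ _ => mem_univ _)
    (hgc.mono (Icc_subset_Icc_right hub)) (hderiv hg) (fun _ _ => mem_univ _)
    (sub_eq_zero.1 hfgu)
  exact ha.ne' (hfg (left_mem_Icc.2 hu.1))

theorem le_gronwallBound_of_hasDerivWithinAt {f' : ℝ → ℝ} {δ K ε : ℝ}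
    (hf : ∀ t ∈ Icc a b, HasDerivWithinAt f (f' t) (Icc a b) t) (ha : f a ≤ δ)
    (bound : ∀ t ∈ Ico a b, f' t ≤ K * f t + ε) :
    ∀ t ∈ Icc a b, f t ≤ gronwallBound δ K ε (t - a) :=
  le_gronwallBound_of_liminf_deriv_right_le (fun x hx => (hf x hx).continuousWithinAt)
    (fun t ht _ hr => ((hf t (Ico_subset_Icc_self ht)).mono_of_mem_nhdsWithin
      (Icc_mem_nhdsGE_of_mem ht)).liminf_right_slope_le hr) ha bound

end ODE

def dsField (s : ℝ) (P : ℝ → ℝ) (t y : ℝ) : ℝ := (y + y ^ 2 - P t) / (s * t * y)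

section DysonSchwinger

variable {s : ℝ} {P : ℝ → ℝ} {x₀ T t y m M Pm : ℝ}

theorem dsField_eq (hy : y ≠ 0) : dsField s P t y = (1 + y - P t / y) / (s * t) := by
  unfold dsField
  field_simp

theorem lipschitzOnWith_dsField (hs : 0 < s) (hx₀ : 0 < x₀) (ht : x₀ ≤ t) (hm : 0 < m)
    (hP : 0 ≤ P t) (hPm : P t ≤ Pm) :
    LipschitzOnWith (Real.toNNReal ((1 + Pm / m ^ 2) / (s * x₀))) (dsField s P t) (Ici m) := by
  refine LipschitzOnWith.of_dist_le_mul fun y₁ (hy₁ : m ≤ y₁) y₂ (hy₂ : m ≤ y₂) => ?_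
  have hy₁₀ : 0 < y₁ := hm.trans_le hy₁
  have hy₂₀ : 0 < y₂ := hm.trans_le hy₂
  have ht₀ : 0 < t := hx₀.trans_le ht
  have hPm₀ : 0 ≤ Pm := hP.trans hPm
  have hdiff : dsField s P t y₁ - dsField s P t y₂ =
      (y₁ - y₂) * ((1 + P t / (y₁ * y₂)) / (s * t)) := by
    rw [dsField_eq hy₁₀.ne', dsField_eq hy₂₀.ne']
    field_simp
    ring
  have hcoef : (1 + P t / (y₁ * y₂)) / (s * t) ≤ (1 + Pm / m ^ 2) / (s * x₀) := by
    gcongr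
    nlinarith
  rw [Real.dist_eq, Real.dist_eq, hdiff, abs_mul, mul_comm, abs_of_nonneg (by positivity),
    Real.coe_toNNReal _ (by positivity)]
  gcongr

theorem dsField_le (hs : 0 < s) (hx₀ : 0 < x₀) (ht : x₀ ≤ t) (hP : 0 ≤ P t) (hy : 0 < y) :
    dsField s P t y ≤ (s * x₀)⁻¹ * y + (s * x₀)⁻¹ := by
  have ht₀ : 0 < t := hx₀.trans_le ht
  rw [dsField_eq hy.ne', ← mul_add_one, ← div_eq_inv_mul]
  calc (1 + y - P t / y) / (s * t) ≤ (1 + y) / (s * t) := by gcongr; linarith [div_nonneg hP hy.le]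
    _ ≤ (y + 1) / (s * x₀) := by rw [add_comm]; gcongr

theorem abs_dsField_le (hs : 0 < s) (hx₀ : 0 < x₀) (ht : x₀ ≤ t) (hm : 0 < m)
    (hP : 0 ≤ P t) (hPm : P t ≤ Pm) (hmy : m ≤ y) (hyM : y ≤ M) :
    |dsField s P t y| ≤ (1 + M + Pm / m) / (s * x₀) := by
  have hy : 0 < y := hm.trans_le hmy
  have ht₀ : 0 < t := hx₀.trans_le ht
  have hPy : P t / y ≤ Pm / m := div_le_div₀ (hP.trans hPm) hPm hm hmy
  have hnum : |1 + y - P t / y| ≤ 1 + M + Pm / m := by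
    rw [abs_le]
    constructor <;> linarith [div_nonneg hP hy.le]
  rw [dsField_eq hy.ne', abs_div, abs_of_pos (by positivity : 0 < s * t)]
  gcongr
  exact (abs_nonneg _).trans hnum

theorem continuousOn_dsField {S : Set ℝ} (hP : ContinuousOn P S) (hS : 0 ∉ S) (hs : s ≠ 0)
    (hy : y ≠ 0) : ContinuousOn (dsField s P · y) S :=
  (continuousOn_const.sub hP).div (by fun_prop) fun t ht =>
    mul_ne_zero (mul_ne_zero hs (ne_of_mem_of_not_mem ht hS)) hy

def clampedField (s : ℝ) (P : ℝ → ℝ) (m M t y : ℝ) : ℝ := dsField s P t (max m (min M y))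

theorem clampedField_eq (hmy : m ≤ y) (hyM : y ≤ M) :
    clampedField s P m M t y = dsField s P t y := by
  simp [clampedField, hmy, hyM]

theorem lipschitzWith_clampedField (hs : 0 < s) (hx₀ : 0 < x₀) (ht : x₀ ≤ t) (hm : 0 < m)
    (hP : 0 ≤ P t) (hPm : P t ≤ Pm) :
    LipschitzWith (Real.toNNReal ((1 + Pm / m ^ 2) / (s * x₀))) (clampedField s P m M t) := by
  have hclamp : LipschitzWith 1 fun y : ℝ => max m (min M y) :=
    (LipschitzWith.id.const_min M).const_max m
  have := lipschitzOnWith_univ.1 ((lipschitzOnWith_dsField hs hx₀ ht hm hP hPm).comp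
    hclamp.lipschitzOnWith fun y _ => le_max_left m (min M y))
  rwa [mul_one] at this

theorem abs_clampedField_le (hs : 0 < s) (hx₀ : 0 < x₀) (ht : x₀ ≤ t) (hm : 0 < m)
    (hmM : m ≤ M) (hP : 0 ≤ P t) (hPm : P t ≤ Pm) :
    |clampedField s P m M t y| ≤ (1 + M + Pm / m) / (s * x₀) :=
  abs_dsField_le hs hx₀ ht hm hP hPm (le_max_left _ _) (max_le hmM (min_le_left _ _))

theorem clampedField_le (hs : 0 < s) (hx₀ : 0 < x₀) (ht : x₀ ≤ t) (hm : 0 < m) (hmM : m ≤ M)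
    (hP : 0 ≤ P t) (hmy : m ≤ y) :
    clampedField s P m M t y ≤ (s * x₀)⁻¹ * y + (s * x₀)⁻¹ := by
  have hclamp : max m (min M y) = min M y := max_eq_right (le_min hmM hmy)
  rw [clampedField, hclamp]
  calc dsField s P t (min M y) ≤ (s * x₀)⁻¹ * min M y + (s * x₀)⁻¹ :=
        dsField_le hs hx₀ ht hP (hm.trans_le (le_min hmM hmy))
    _ ≤ (s * x₀)⁻¹ * y + (s * x₀)⁻¹ := by gcongr; exact min_le_right _ _

theorem continuousOn_clampedField (hs : s ≠ 0) (hx₀ : 0 < x₀) (hm : 0 < m)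
    (hP : ContinuousOn P (Icc x₀ T)) : ContinuousOn (clampedField s P m M · y) (Icc x₀ T) :=
  continuousOn_dsField hP (fun h => hx₀.not_ge h.1) hs
    (hm.trans_le (le_max_left m (min M y))).ne'

theorem IsDSSolution.continuousOn {γ : ℝ → ℝ} {I : Set ℝ} (h : IsDSSolution s P γ I) :
    ContinuousOn γ I :=
  fun x hx => (h.2 x hx).continuousWithinAt

theorem IsDSSolution.mono {γ : ℝ → ℝ} {I J : Set ℝ} (h : IsDSSolution s P γ J) (hIJ : I ⊆ J) :
    IsDSSolution s P γ I :=
  ⟨fun x hx => h.1 x (hIJ hx), fun x hx => (h.2 x (hIJ hx)).mono hIJ⟩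

theorem IsDSSolution.eqOn (hs : 0 < s) (hx₀ : 0 < x₀) (hPc : ContinuousOn P (Icc x₀ T))
    (hP : ∀ t ∈ Icc x₀ T, 0 ≤ P t) {f g : ℝ → ℝ} (hf : IsDSSolution s P f (Icc x₀ T))
    (hg : IsDSSolution s P g (Icc x₀ T)) (h₀ : f x₀ = g x₀) : EqOn f g (Icc x₀ T) := by
  obtain ⟨ε, hε, hfgε⟩ := isCompact_Icc.exists_forall_le' (a := 0)
    (hf.continuousOn.inf hg.continuousOn) fun t ht => lt_min (hf.1 t ht) (hg.1 t ht)
  obtain ⟨Pm, hPm⟩ := isCompact_Icc.exists_bound_of_continuousOn hPc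
  have hderiv {h : ℝ → ℝ} (hh : IsDSSolution s P h (Icc x₀ T)) :
      ∀ t ∈ Ico x₀ T, HasDerivWithinAt h (dsField s P t (h t)) (Ici t) t := fun t ht =>
    (hh.2 t (Ico_subset_Icc_self ht)).mono_of_mem_nhdsWithin (Icc_mem_nhdsGE_of_mem ht)
  exact ODE_solution_unique_of_mem_Icc_right (s := fun _ => Ici ε)
    (fun t ht => lipschitzOnWith_dsField hs hx₀ ht.1 hε (hP t (Ico_subset_Icc_self ht))
      ((le_abs_self _).trans (hPm t (Ico_subset_Icc_self ht))))
    hf.continuousOn (hderiv hf)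
    (fun t ht => (hfgε t (Ico_subset_Icc_self ht)).trans (min_le_left _ _))
    hg.continuousOn (hderiv hg)
    (fun t ht => (hfgε t (Ico_subset_Icc_self ht)).trans (min_le_right _ _)) h₀

theorem exists_isDSSolution_Icc (hs : 0 < s) (hx₀ : 0 < x₀) (hT : x₀ ≤ T)
    (hPc : ContinuousOn P (Icc x₀ T)) (hP : ∀ t ∈ Icc x₀ T, 0 ≤ P t) {γb : ℝ → ℝ}
    (hγb : IsDSSolution s P γb (Icc x₀ T)) {a : ℝ} (ha : γb x₀ < a) :
    ∃ γ, IsDSSolution s P γ (Icc x₀ T) ∧ γ x₀ = a := by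
  obtain ⟨m, hm, hγbm⟩ := isCompact_Icc.exists_forall_le' (a := 0) hγb.continuousOn hγb.1
  obtain ⟨Mb, hMb⟩ := isCompact_Icc.exists_bound_of_continuousOn hγb.continuousOn
  obtain ⟨Pm, hPm⟩ := isCompact_Icc.exists_bound_of_continuousOn hPc
  have hPle : ∀ t ∈ Icc x₀ T, P t ≤ Pm := fun t ht => (le_abs_self _).trans (hPm t ht)
  set K := (s * x₀)⁻¹
  -- `M` must dominate `γb`, so that `γb` also solves the clamped equation, and the Grönwall
  -- bound for the solution `γ` constructed below.
  set M := max Mb (gronwallBound a K K (T - x₀))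
  have hγbM : ∀ t ∈ Icc x₀ T, γb t ≤ M := fun t ht =>
    ((le_abs_self _).trans (hMb t ht)).trans (le_max_left _ _)
  have hmM : m ≤ M := (hγbm x₀ (left_mem_Icc.2 hT)).trans (hγbM x₀ (left_mem_Icc.2 hT))
  obtain ⟨γ, hγa, hγ⟩ := exists_hasDerivWithinAt_Icc_of_lipschitzWith hT
    (fun t ht => lipschitzWith_clampedField (M := M) hs hx₀ ht.1 hm (hP t ht) (hPle t ht))
    (fun y => continuousOn_clampedField hs.ne' hx₀ hm hPc)
    (fun t ht y => (Real.norm_eq_abs _).trans_le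
      (abs_clampedField_le hs hx₀ ht.1 hm hmM (hP t ht) (hPle t ht))) a
  have hγb_lt : ∀ t ∈ Icc x₀ T, γb t < γ t := ODE_solution_lt_of_lt
    (fun t ht => lipschitzWith_clampedField (M := M) hs hx₀ ht.1 hm (hP t ht) (hPle t ht)) hγ
    (fun t ht => by rw [clampedField_eq (hγbm t ht) (hγbM t ht)]; exact hγb.2 t ht)
    (hγa ▸ ha)
  have hmγ : ∀ t ∈ Icc x₀ T, m ≤ γ t := fun t ht => (hγbm t ht).trans (hγb_lt t ht).le
  have hγM : ∀ t ∈ Icc x₀ T, γ t ≤ M := fun t ht =>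
    calc γ t ≤ gronwallBound a K K (t - x₀) :=
          le_gronwallBound_of_hasDerivWithinAt hγ hγa.le (fun τ hτ =>
            clampedField_le hs hx₀ hτ.1 hm hmM (hP τ (Ico_subset_Icc_self hτ))
              (hmγ τ (Ico_subset_Icc_self hτ))) t ht
      _ ≤ gronwallBound a K K (T - x₀) :=
          gronwallBound_mono ((hγb.1 x₀ (left_mem_Icc.2 hT)).trans ha).le (by positivity)
            (by positivity) (by linarith [ht.2])
      _ ≤ M := le_max_right _ _
  refine ⟨γ, ⟨fun t ht => hm.trans_le (hmγ t ht), fun t ht => ?_⟩, hγa⟩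
  have hγt := hγ t ht
  rwa [clampedField_eq (hmγ t ht) (hγM t ht)] at hγt

theorem IsDSSolution.of_eqOn_Icc {γ : ℝ → ℝ} {Γ : ℕ → ℝ → ℝ}
    (hΓ : ∀ n, IsDSSolution s P (Γ n) (Icc x₀ (x₀ + n)))
    (hγ : ∀ n, EqOn γ (Γ n) (Icc x₀ (x₀ + n))) : IsDSSolution s P γ (Ici x₀) := by
  have hmem {x : ℝ} (hx : x ∈ Ici x₀) :
      x ∈ Icc x₀ (x₀ + (⌈x - x₀⌉₊ + 1 : ℕ)) ∧ x < x₀ + (⌈x - x₀⌉₊ + 1 : ℕ) := by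
    have := Nat.le_ceil (x - x₀)
    push_cast
    exact ⟨⟨hx, by linarith⟩, by linarith⟩
  refine ⟨fun x hx => hγ _ (hmem hx).1 ▸ (hΓ _).1 x (hmem hx).1, fun x hx => ?_⟩
  obtain ⟨hxn, hlt⟩ := hmem hx
  have hnhds : Icc x₀ (x₀ + (⌈x - x₀⌉₊ + 1 : ℕ)) ∈ 𝓝[Ici x₀] x :=
    inter_mem_nhdsWithin _ (Iic_mem_nhds hlt)
  rw [hγ _ hxn]
  exact ((hΓ _).2 x hxn).mono_of_mem_nhdsWithin hnhds |>.congr_of_eventuallyEq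
    (eventuallyEq_of_mem hnhds (hγ _)) (hγ _ hxn)

theorem exists_isDSSolution_Ici (hs : 0 < s) (hx₀ : 0 < x₀) (hPc : ContinuousOn P (Ici x₀))
    (hP : ∀ t ∈ Ici x₀, 0 ≤ P t) {γb : ℝ → ℝ} (hγb : IsDSSolution s P γb (Ici x₀)) {a : ℝ}
    (ha : γb x₀ < a) : ∃ γ, IsDSSolution s P γ (Ici x₀) ∧ γ x₀ = a := by
  have hsub (n : ℕ) : Icc x₀ (x₀ + n) ⊆ Ici x₀ := Icc_subset_Ici_self
  have hle (n : ℕ) : x₀ ≤ x₀ + n := le_add_of_nonneg_right n.cast_nonneg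
  choose Γ hΓ hΓa using fun n : ℕ => exists_isDSSolution_Icc hs hx₀ (hle n)
    (hPc.mono (hsub n)) (fun t ht => hP t (hsub n ht)) (hγb.mono (hsub n)) ha
  have hcompat {k n : ℕ} (hkn : k ≤ n) : EqOn (Γ k) (Γ n) (Icc x₀ (x₀ + k)) :=
    have hkn' : Icc x₀ (x₀ + k) ⊆ Icc x₀ (x₀ + n) := Icc_subset_Icc_right (by gcongr)
    IsDSSolution.eqOn hs hx₀ (hPc.mono (hsub k)) (fun t ht => hP t (hsub k ht)) (hΓ k)
      ((hΓ n).mono hkn') ((hΓa k).trans (hΓa n).symm)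
  refine ⟨fun x => Γ ⌈x - x₀⌉₊ x, IsDSSolution.of_eqOn_Icc hΓ fun n x hx => ?_, by simp [hΓa]⟩
  exact hcompat (Nat.ceil_le.2 (by linarith [hx.2])) ⟨hx.1, by linarith [Nat.le_ceil (x - x₀)]⟩

end DysonSchwinger

theorem stmt_12_general (s : ℝ) (hs : 0 < s) (P : ℝ → ℝ) (hP : H1 P)
    (x₀ : ℝ) (hx₀ : 0 < x₀) (b : ℝ)
    (hex : ∃ γ : ℝ → ℝ, IsDSSolution s P γ (Set.Ici x₀) ∧ γ x₀ = b) :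
    ∀ a ≥ b, ∃ γ : ℝ → ℝ, IsDSSolution s P γ (Set.Ici x₀) ∧ γ x₀ = a := by
  obtain ⟨γb, hγb, rfl⟩ := hex
  intro a ha
  obtain rfl | hlt := ha.eq_or_lt
  · exact ⟨γb, hγb, rfl⟩
  exact exists_isDSSolution_Ici hs hx₀ (hP.1.continuousOn.mono (Ici_subset_Ici.2 hx₀.le))
    (fun t ht => (hP.2.2 t (hx₀.trans_le ht)).le) hγb hlt

theorem stmt_12 (s : ℝ) (hs : 0 < s) (P : ℝ → ℝ) (hP : H1 P)
    (x₀ : ℝ) (hx₀ : 0 < x₀) (b : ℝ) (hb : 0 < b)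
    (hex : ∃ γ : ℝ → ℝ, IsDSSolution s P γ (Set.Ici x₀) ∧ γ x₀ = b) :
    ∀ a ≥ b, ∃ γ : ℝ → ℝ, IsDSSolution s P γ (Set.Ici x₀) ∧ γ x₀ = a :=
  stmt_12_general s hs P hP x₀ hx₀ b hex
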